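/- arXiv:math/0509251 — 2 statements merged into one kernel-verified Lean document; each statement's English description precedes it below -/
import Mathlib

section
/- Let (e,f) be a local BMW pair in A. Then κ_e·f·κ_e = ν⁻¹·κ_e and κ_e·f⁻¹·κ_e = ν·κ_e. -/
/-!
Conjugation by `g = f e` carries `f` to `e` (this is the braid relation), hence `κ_f` to `κ_e`,
and it carries `f e^{±1} f⁻¹` to `f^{±1}`. So `κ_e f^{±1} κ_e` is the conjugate of
`κ_f (f e^{±1} f⁻¹) κ_f`, in which `f` and `f⁻¹` are absorbed by `κ_f` with factors `ν` and
`ν⁻¹`, leaving the conjugate of `κ_f e^{±1} κ_f`.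
-/

namespace BMWPaper

noncomputable section

/-- `κ_u := λ⁻¹ ν⁻¹ (q - u)(q⁻¹ + u)` for an invertible element `u` of a ℂ-algebra,
where `λ := q - q⁻¹`. -/
def kap (q ν : ℂ) {A : Type*} [Ring A] [Algebra ℂ A] (u : Aˣ) : A :=
  ((q - q⁻¹)⁻¹ * ν⁻¹) • ((q • (1 : A) - (u : A)) * (q⁻¹ • (1 : A) + (u : A)))

/-- `μ := λ⁻¹ ν⁻¹ (q - ν)(q⁻¹ + ν)`. -/
def muBMW (q ν : ℂ) : ℂ := ((q - q⁻¹)⁻¹ * ν⁻¹) * ((q - ν) * (q⁻¹ + ν))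

/-- A local BMW pair `(e, f)` of invertible elements of a ℂ-algebra `A`:
`efe = fef`, `e κ_e = κ_e e = ν κ_e`, `f κ_f = κ_f f = ν κ_f`,
`κ_f e κ_f = ν⁻¹ κ_f` and `κ_f e⁻¹ κ_f = ν κ_f`. -/
def LocalBMWPair (q ν : ℂ) {A : Type*} [Ring A] [Algebra ℂ A] (e f : Aˣ) : Prop :=
  (e : A) * f * e = (f : A) * e * f ∧
  (e : A) * kap q ν e = ν • kap q ν e ∧
  kap q ν e * e = ν • kap q ν e ∧
  (f : A) * kap q ν f = ν • kap q ν f ∧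
  kap q ν f * f = ν • kap q ν f ∧
  kap q ν f * e * kap q ν f = ν⁻¹ • kap q ν f ∧
  kap q ν f * (↑e⁻¹ : A) * kap q ν f = ν • kap q ν f

theorem semiconjBy_of_braid {G : Type*} [Group G] {a b : G} (h : a * b * a = b * a * b) :
    SemiconjBy (b * a) b a ∧ SemiconjBy (b * a) (b * a * b⁻¹) b := by
  constructor
  · simpa only [SemiconjBy, mul_assoc] using h.symm
  · calc b * a * (b * a * b⁻¹) = b * (a * b * a) * b⁻¹ := by group
      _ = b * (b * a * b) * b⁻¹ := by rw [h]
      _ = b * (b * a) := by group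

theorem _root_.SemiconjBy.eq_of_units {M : Type*} [Monoid M] {g : Mˣ} {x y z : M}
    (hy : SemiconjBy (g : M) x y) (hz : SemiconjBy (g : M) x z) : y = z :=
  (Units.mul_left_inj g).mp (hy.symm.trans hz)

theorem _root_.SemiconjBy.mul_mul_eq_smul {R M : Type*} [Monoid M] [SMul R M]
    [SMulCommClass R M M] [IsScalarTower R M M] {g : Mˣ} {k k' y y' : M} {c : R}
    (hk : SemiconjBy (g : M) k k') (hy : SemiconjBy (g : M) y' y) (h : k * y' * k = c • k) :
    k' * y * k' = c • k' := by
  have hsandwich := (hk.mul_right hy).mul_right hk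
  rw [h] at hsandwich
  exact hsandwich.eq_of_units (hk.smul_right c)

theorem mul_conj_mul_eq_of_mul_eq_smul {K A : Type*} [Field K] [Ring A] [Algebra K A]
    {c : K} (hc : c ≠ 0) {k : A} {u : Aˣ} (hl : k * u = c • k) (hr : (u : A) * k = c • k)
    (y : A) : k * (u * y * ↑u⁻¹) * k = k * y * k := by
  have hinv : (↑u⁻¹ : A) * k = c⁻¹ • k := by
    rw [eq_inv_smul_iff₀ hc, ← mul_smul_comm, ← hr, Units.inv_mul_cancel_left]
  calc k * (u * y * ↑u⁻¹) * k = (k * u) * y * (↑u⁻¹ * k) := by simp only [mul_assoc]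
    _ = (c * c⁻¹) • (k * y * k) := by
      rw [hl, hinv, smul_mul_assoc, smul_mul_assoc, mul_smul_comm, smul_smul]
    _ = k * y * k := by rw [mul_inv_cancel₀ hc, one_smul]

theorem semiconjBy_kap {A : Type*} [Ring A] [Algebra ℂ A] (q ν : ℂ) {g : A} {u v : Aˣ}
    (h : SemiconjBy g u v) : SemiconjBy g (kap q ν u) (kap q ν v) := by
  unfold kap
  refine SemiconjBy.smul_right (SemiconjBy.mul_right ?_ ?_) _
  · exact SemiconjBy.sub_right ((Commute.one_right g).smul_right q) h
  · exact SemiconjBy.add_right ((Commute.one_right g).smul_right q⁻¹) h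

theorem stmt4_general (q ν : ℂ) (hν0 : ν ≠ 0)
    (A : Type*) [Ring A] [Algebra ℂ A]
    (e f : Aˣ) (h : LocalBMWPair q ν e f) :
    kap q ν e * f * kap q ν e = ν⁻¹ • kap q ν e ∧
    kap q ν e * (↑f⁻¹ : A) * kap q ν e = ν • kap q ν e := by
  obtain ⟨hbr, -, -, hfκ, hκf, hκeκ, hκeinvκ⟩ := h
  have hbrU : e * f * e = f * e * f := Units.ext (by simpa using hbr)
  obtain ⟨hfe, hfef⟩ := semiconjBy_of_braid hbrU
  have hκ := semiconjBy_kap q ν hfe.units_val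
  have hκconj := mul_conj_mul_eq_of_mul_eq_smul hν0 hκf hfκ
  constructor
  · refine hκ.mul_mul_eq_smul hfef.units_val ?_
    rw [Units.val_mul, Units.val_mul, hκconj, hκeκ]
  · refine hκ.mul_mul_eq_smul hfef.units_val.units_inv_right ?_
    rw [show (f * e * f⁻¹)⁻¹ = f * e⁻¹ * f⁻¹ by group, Units.val_mul, Units.val_mul,
      hκconj, hκeinvκ]

/-- for a local BMW pair `(e,f)`:
`κ_e f κ_e = ν⁻¹ κ_e` and `κ_e f⁻¹ κ_e = ν κ_e`. -/
theorem stmt4 (q ν : ℂ) (hq0 : q ≠ 0) (hq1 : q ≠ 1) (hqm1 : q ≠ -1)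
    (hν0 : ν ≠ 0) (hνq : ν ≠ q) (hνq' : ν ≠ -q⁻¹)
    (A : Type*) [Ring A] [Algebra ℂ A]
    (e f : Aˣ) (h : LocalBMWPair q ν e f) :
    kap q ν e * f * kap q ν e = ν⁻¹ • kap q ν e ∧
    kap q ν e * (↑f⁻¹ : A) * kap q ν e = ν • kap q ν e :=
  stmt4_general q ν hν0 A e f h

end

end BMWPaper
end

section
/- Let R be a skew-invertible BMW type R-matrix on V⊗V with parameters (q,ν), K := λ⁻¹ν⁻¹(qI − R)(q⁻¹I + R), and r := rank K (a natural number, cast to ℂ). Then Tr₍₂₎K = ν⁻¹·r·D and Tr₍₁₎K = ν⁻¹·r·C. -/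
open scoped BigOperators

namespace BMWPaper

noncomputable section

/-- Operators on `V ⊗ V`, `V = ι → ℂ`, as matrices indexed by pairs. -/
abbrev Op (ι : Type*) := Matrix (ι × ι) (ι × ι) ℂ

/-- Operators on `V ⊗ V ⊗ V` as matrices indexed by triples. -/
abbrev Op3 (ι : Type*) := Matrix (ι × ι × ι) (ι × ι × ι) ℂ

variable {ι : Type*} [Fintype ι] [DecidableEq ι]

/-- `M₁₂ = M ⊗ I`. -/
def op12 (M : Op ι) : Op3 ι :=
  Matrix.of fun p q => M (p.1, p.2.1) (q.1, q.2.1) * (if p.2.2 = q.2.2 then 1 else 0)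

/-- `M₂₃ = I ⊗ M`. -/
def op23 (M : Op ι) : Op3 ι :=
  Matrix.of fun p q => (if p.1 = q.1 then 1 else 0) * M (p.2.1, p.2.2) (q.2.1, q.2.2)

/-- The permutation operator `P`, `P^{kl}_{ij} = δ^k_j δ^l_i`. -/
def Pmat (ι : Type*) [DecidableEq ι] : Op ι :=
  Matrix.of fun p q => if p.1 = q.2 ∧ p.2 = q.1 then (1 : ℂ) else 0

/-- Partial trace over the first factor: `(Tr₍₁₎M)^l_j = ∑_a M^{al}_{aj}`. -/
def tr1 (M : Op ι) : Matrix ι ι ℂ := Matrix.of fun l j => ∑ a, M (a, l) (a, j)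

/-- Partial trace over the second factor: `(Tr₍₂₎M)^k_i = ∑_a M^{ka}_{ia}`. -/
def tr2 (M : Op ι) : Matrix ι ι ℂ := Matrix.of fun k i => ∑ a, M (k, a) (i, a)

/-- Partial trace over the middle factor of an operator on `V ⊗ V ⊗ V`. -/
def tr2of3 (M : Op3 ι) : Op ι :=
  Matrix.of fun p q => ∑ a, M (p.1, a, p.2) (q.1, a, q.2)

/-- `U₁ = U ⊗ I` for an `N×N` matrix `U`. -/
def u1 (U : Matrix ι ι ℂ) : Op ι :=
  Matrix.of fun p q => U p.1 q.1 * (if p.2 = q.2 then 1 else 0)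

/-- `U₂ = I ⊗ U` for an `N×N` matrix `U`. -/
def u2 (U : Matrix ι ι ℂ) : Op ι :=
  Matrix.of fun p q => (if p.1 = q.1 then 1 else 0) * U p.2 q.2

/-- `Ψ` is a skew inverse of `R`: `Tr₍₂₎(R₁₂Ψ₂₃) = P₁₃ = Tr₍₂₎(Ψ₁₂R₂₃)`. -/
def SkewInverse (R Ψ : Op ι) : Prop :=
  tr2of3 (op12 R * op23 Ψ) = Pmat ι ∧ tr2of3 (op12 Ψ * op23 R) = Pmat ι

/-- The Yang–Baxter equation `R₁₂R₂₃R₁₂ = R₂₃R₁₂R₂₃`. -/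
def YangBaxter (R : Op ι) : Prop :=
  op12 R * op23 R * op12 R = op23 R * op12 R * op23 R

/-- `K := λ⁻¹ν⁻¹(qI - R)(q⁻¹I + R)` with `λ := q - q⁻¹`. -/
def Kmat (q ν : ℂ) (R : Op ι) : Op ι :=
  ((q - q⁻¹)⁻¹ * ν⁻¹) • ((q • (1 : Op ι) - R) * (q⁻¹ • (1 : Op ι) + R))

/-- `R` is a BMW type R-matrix with parameters `(q, ν)`: `R` is invertible, satisfies
the Yang–Baxter equation, and with `K := Kmat q ν R` the relations
`RK = KR = νK`, `K₂₃R₁₂K₂₃ = ν⁻¹K₂₃` and `K₂₃R₁₂⁻¹K₂₃ = νK₂₃` hold. -/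
def BMWType (q ν : ℂ) (R : Op ι) : Prop :=
  IsUnit R ∧ YangBaxter R ∧
  R * Kmat q ν R = ν • Kmat q ν R ∧
  Kmat q ν R * R = ν • Kmat q ν R ∧
  op23 (Kmat q ν R) * op12 R * op23 (Kmat q ν R) = ν⁻¹ • op23 (Kmat q ν R) ∧
  op23 (Kmat q ν R) * op12 R⁻¹ * op23 (Kmat q ν R) = ν • op23 (Kmat q ν R)

set_option linter.unusedSectionVars false

section Aux
variable {ι : Type*} [Fintype ι] [DecidableEq ι]

theorem op12_mul (M N : Op ι) : op12 (M * N) = op12 M * op12 N := by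
  ext ⟨p1, p2, p3⟩ ⟨q1, q2, q3⟩
  simp [op12, Matrix.mul_apply, Fintype.sum_prod_type, mul_ite, ite_mul,
    Finset.sum_ite_eq, Finset.sum_ite_eq', Finset.mul_sum, Finset.sum_mul]

theorem op23_mul (M N : Op ι) : op23 (M * N) = op23 M * op23 N := by
  ext ⟨p1, p2, p3⟩ ⟨q1, q2, q3⟩
  simp [op23, Matrix.mul_apply, Fintype.sum_prod_type, mul_ite, ite_mul,
    Finset.sum_ite_eq, Finset.sum_ite_eq', Finset.mul_sum, Finset.sum_mul]

theorem op12_one : op12 (1 : Op ι) = 1 := by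
  ext ⟨p1, p2, p3⟩ ⟨q1, q2, q3⟩
  simp only [op12, Matrix.of_apply, Matrix.one_apply, Prod.ext_iff]
  by_cases h1 : p1 = q1 <;> by_cases h2 : p2 = q2 <;> by_cases h3 : p3 = q3 <;> simp_all

theorem op23_one : op23 (1 : Op ι) = 1 := by
  ext ⟨p1, p2, p3⟩ ⟨q1, q2, q3⟩
  simp only [op23, Matrix.of_apply, Matrix.one_apply, Prod.ext_iff]
  by_cases h1 : p1 = q1 <;> by_cases h2 : p2 = q2 <;> by_cases h3 : p3 = q3 <;> simp_all

theorem op12_smul (c : ℂ) (M : Op ι) : op12 (c • M) = c • op12 M := by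
  ext p q; simp [op12, mul_assoc]

theorem op23_smul (c : ℂ) (M : Op ι) : op23 (c • M) = c • op23 M := by
  ext p q; simp [op23]

theorem op12_add (M N : Op ι) : op12 (M + N) = op12 M + op12 N := by
  ext p q; simp [op12, add_mul]; split <;> simp

theorem op23_add (M N : Op ι) : op23 (M + N) = op23 M + op23 N := by
  ext p q; simp [op23, mul_add]

theorem op12_sub (M N : Op ι) : op12 (M - N) = op12 M - op12 N := by
  ext p q; simp [op12, sub_mul]; split <;> simp

theorem op23_sub (M N : Op ι) : op23 (M - N) = op23 M - op23 N := by
  ext p q; simp [op23, mul_sub]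

end Aux

section Aux2
variable {ι : Type*} [Fintype ι] [DecidableEq ι]

def tr23of3 (M : Op3 ι) : Matrix ι ι ℂ := Matrix.of fun k i => ∑ a, ∑ b, M (k,a,b) (i,a,b)
def tr12of3 (M : Op3 ι) : Matrix ι ι ℂ := Matrix.of fun c n => ∑ x, ∑ y, M (x,y,c) (x,y,n)

theorem tr23of3_comm (M : Op3 ι) (A : Op ι) :
    tr23of3 (M * op23 A) = tr23of3 (op23 A * M) := by
  ext k i
  simp only [tr23of3, Matrix.of_apply, Matrix.mul_apply, op23, Fintype.sum_prod_type,
    mul_ite, ite_mul, mul_one, one_mul, mul_zero, zero_mul,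
    Finset.sum_ite_irrel, Finset.sum_const_zero,
    Finset.sum_ite_eq, Finset.sum_ite_eq', Finset.mem_univ, if_true]
  calc (∑ x : ι, ∑ x_1 : ι, ∑ x_2 : ι, ∑ x_3 : ι, M (k, x, x_1) (i, x_2, x_3) * A (x_2, x_3) (x, x_1))
      = ∑ p : ι × ι, ∑ q : ι × ι, M (k, p.1, p.2) (i, q.1, q.2) * A q p := by
        simp [Fintype.sum_prod_type]
    _ = ∑ q : ι × ι, ∑ p : ι × ι, M (k, p.1, p.2) (i, q.1, q.2) * A q p := Finset.sum_comm
    _ = ∑ x : ι, ∑ x_1 : ι, ∑ x_2 : ι, ∑ x_3 : ι, A (x, x_1) (x_2, x_3) * M (k, x_2, x_3) (i, x, x_1) := by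
        simp [Fintype.sum_prod_type, mul_comm]

end Aux2

section Aux3
variable {ι : Type*} [Fintype ι] [DecidableEq ι]

theorem tr12of3_comm (M : Op3 ι) (A : Op ι) :
    tr12of3 (op12 A * M) = tr12of3 (M * op12 A) := by
  ext c n
  simp only [tr12of3, Matrix.of_apply, Matrix.mul_apply, op12, Fintype.sum_prod_type,
    mul_ite, ite_mul, mul_one, one_mul, mul_zero, zero_mul,
    Finset.sum_ite_irrel, Finset.sum_const_zero,
    Finset.sum_ite_eq, Finset.sum_ite_eq', Finset.mem_univ, if_true]
  calc (∑ x : ι, ∑ y : ι, ∑ m : ι, ∑ p : ι, A (x, y) (m, p) * M (m, p, c) (x, y, n))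
      = ∑ s : ι × ι, ∑ t : ι × ι, A s t * M (t.1, t.2, c) (s.1, s.2, n) := by
        simp [Fintype.sum_prod_type]
    _ = ∑ t : ι × ι, ∑ s : ι × ι, A s t * M (t.1, t.2, c) (s.1, s.2, n) := Finset.sum_comm
    _ = ∑ x : ι, ∑ y : ι, ∑ m : ι, ∑ p : ι, M (x, y, c) (m, p, n) * A (m, p) (x, y) := by
        simp [Fintype.sum_prod_type, mul_comm]

theorem tr23of3_op23 (A : Op ι) : tr23of3 (op23 A) = A.trace • (1 : Matrix ι ι ℂ) := by
  ext k i
  simp [tr23of3, op23, Matrix.trace, Matrix.diag, Matrix.one_apply, Matrix.smul_apply,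
    Fintype.sum_prod_type, ite_mul, mul_ite]

theorem tr12of3_op12 (A : Op ι) : tr12of3 (op12 A) = A.trace • (1 : Matrix ι ι ℂ) := by
  ext c n
  simp [tr12of3, op12, Matrix.trace, Matrix.diag, Matrix.one_apply, Matrix.smul_apply,
    Fintype.sum_prod_type, ite_mul, mul_ite]

theorem tr23of3_smul (c : ℂ) (M : Op3 ι) : tr23of3 (c • M) = c • tr23of3 M := by
  ext k i; simp [tr23of3, Finset.mul_sum]

theorem tr12of3_smul (c : ℂ) (M : Op3 ι) : tr12of3 (c • M) = c • tr12of3 M := by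
  ext k i; simp [tr12of3, Finset.mul_sum]

theorem tr2_smul (c : ℂ) (M : Op ι) : tr2 (c • M) = c • tr2 M := by
  ext k i; simp [tr2, Finset.mul_sum]

theorem tr1_smul (c : ℂ) (M : Op ι) : tr1 (c • M) = c • tr1 M := by
  ext k i; simp [tr1, Finset.mul_sum]

theorem u2_one : u2 (1 : Matrix ι ι ℂ) = 1 := by
  ext p q
  simp only [u2, Matrix.of_apply, Matrix.one_apply, Prod.ext_iff]
  by_cases h1 : p.1 = q.1 <;> by_cases h2 : p.2 = q.2 <;> simp_all

theorem u1_one : u1 (1 : Matrix ι ι ℂ) = 1 := by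
  ext p q
  simp only [u1, Matrix.of_apply, Matrix.one_apply, Prod.ext_iff]
  by_cases h1 : p.1 = q.1 <;> by_cases h2 : p.2 = q.2 <;> simp_all

theorem u2_smul (c : ℂ) (U : Matrix ι ι ℂ) : u2 (c • U) = c • u2 U := by
  ext p q; simp [u2]

theorem u1_smul (c : ℂ) (U : Matrix ι ι ℂ) : u1 (c • U) = c • u1 U := by
  ext p q; simp [u1, mul_assoc]

end Aux3

section Aux4
variable {ι : Type*} [Fintype ι] [DecidableEq ι]

theorem bridge2 (R K : Op ι) :
    tr23of3 (op12 R * op23 K) = tr2 (R * u2 (tr2 K)) := by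
  ext k i
  simp only [tr23of3, tr2, u2, Matrix.of_apply, Matrix.mul_apply, op12, op23,
    Fintype.sum_prod_type, mul_ite, ite_mul, mul_one, one_mul, mul_zero, zero_mul,
    Finset.sum_ite_irrel, Finset.sum_const_zero,
    Finset.sum_ite_eq, Finset.sum_ite_eq', Finset.mem_univ, if_true,
    Finset.mul_sum, Finset.sum_mul]
  exact Finset.sum_congr rfl fun a _ => Finset.sum_comm

theorem bridge1 (R K : Op ι) :
    tr12of3 (op12 K * op23 R) = tr1 (u1 (tr1 K) * R) := by
  ext c n
  simp only [tr12of3, tr1, u1, Matrix.of_apply, Matrix.mul_apply, op12, op23,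
    Fintype.sum_prod_type, mul_ite, ite_mul, mul_one, one_mul, mul_zero, zero_mul,
    Finset.sum_ite_irrel, Finset.sum_const_zero,
    Finset.sum_ite_eq, Finset.sum_ite_eq', Finset.mem_univ, if_true,
    Finset.mul_sum, Finset.sum_mul]
  rw [Finset.sum_comm]
  exact Finset.sum_congr rfl fun _ _ => Finset.sum_comm

end Aux4

section Aux5
variable {ι : Type*} [Fintype ι] [DecidableEq ι]

theorem skew_inv2 (R Ψ : Op ι) (h : tr2of3 (op12 Ψ * op23 R) = Pmat ι) (X : Matrix ι ι ℂ) :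
    tr2 (Ψ * u2 (tr2 (R * u2 X))) = X := by
  have hc : ∀ k l i j, (∑ a, ∑ n, Ψ (k,a) (i,n) * R (n,l) (a,j)) = if k = j ∧ l = i then (1:ℂ) else 0 := by
    intro k l i j
    have := congrFun (congrFun h (k,l)) (i,j)
    simpa [tr2of3, Pmat, op12, op23, Matrix.mul_apply, Fintype.sum_prod_type, mul_ite, ite_mul,
      Finset.sum_ite_irrel, Finset.sum_const_zero, Finset.sum_ite_eq, Finset.sum_ite_eq',
      mul_one, one_mul, mul_zero, zero_mul] using this
  ext k i
  simp only [tr2, u2, Matrix.of_apply, Matrix.mul_apply, Fintype.sum_prod_type, mul_ite, ite_mul,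
    mul_one, one_mul, mul_zero, zero_mul, Finset.sum_ite_irrel, Finset.sum_const_zero,
    Finset.sum_ite_eq, Finset.sum_ite_eq', Finset.mem_univ, if_true, Finset.mul_sum, Finset.sum_mul]
  calc (∑ x : ι, ∑ x_1 : ι, ∑ x_2 : ι, ∑ x_3 : ι, Ψ (k, x) (i, x_1) * (R (x_1, x_2) (x, x_3) * X x_3 x_2))
      = ∑ p : ι × ι, ∑ q : ι × ι, Ψ (k, p.1) (i, p.2) * (R (p.2, q.1) (p.1, q.2) * X q.2 q.1) := by
        simp [Fintype.sum_prod_type]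
    _ = ∑ q : ι × ι, ∑ p : ι × ι, Ψ (k, p.1) (i, p.2) * (R (p.2, q.1) (p.1, q.2) * X q.2 q.1) :=
        Finset.sum_comm
    _ = ∑ q : ι × ι, (∑ a, ∑ n, Ψ (k, a) (i, n) * R (n, q.1) (a, q.2)) * X q.2 q.1 := by
        simp [Fintype.sum_prod_type, Finset.sum_mul, mul_assoc]
    _ = ∑ q : ι × ι, (if k = q.2 ∧ q.1 = i then (1:ℂ) else 0) * X q.2 q.1 := by
        refine Finset.sum_congr rfl fun q _ => ?_
        rw [hc k q.1 i q.2]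
    _ = X k i := by simp [Fintype.sum_prod_type, ite_mul, ite_and, Finset.sum_ite_irrel, Finset.sum_const_zero, Finset.sum_ite_eq, Finset.sum_ite_eq']

theorem skew_inv1 (R Ψ : Op ι) (h : tr2of3 (op12 R * op23 Ψ) = Pmat ι) (X : Matrix ι ι ℂ) :
    tr1 (Ψ * u1 (tr1 (u1 X * R))) = X := by
  have hc : ∀ k l i j, (∑ a, ∑ n, R (k,a) (i,n) * Ψ (n,l) (a,j)) = if k = j ∧ l = i then (1:ℂ) else 0 := by
    intro k l i j
    have := congrFun (congrFun h (k,l)) (i,j)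
    simpa [tr2of3, Pmat, op12, op23, Matrix.mul_apply, Fintype.sum_prod_type, mul_ite, ite_mul,
      Finset.sum_ite_irrel, Finset.sum_const_zero, Finset.sum_ite_eq, Finset.sum_ite_eq',
      mul_one, one_mul, mul_zero, zero_mul] using this
  ext l j
  simp only [tr1, u1, Matrix.of_apply, Matrix.mul_apply, Fintype.sum_prod_type, mul_ite, ite_mul,
    mul_one, one_mul, mul_zero, zero_mul, Finset.sum_ite_irrel, Finset.sum_const_zero,
    Finset.sum_ite_eq, Finset.sum_ite_eq', Finset.mem_univ, if_true, Finset.mul_sum, Finset.sum_mul]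
  calc (∑ x : ι, ∑ x_1 : ι, ∑ x_2 : ι, ∑ x_3 : ι, Ψ (x, l) (x_1, j) * (X x_2 x_3 * R (x_3, x_1) (x_2, x)))
      = ∑ p : ι × ι, ∑ q : ι × ι, Ψ (p.1, l) (p.2, j) * (X q.1 q.2 * R (q.2, p.2) (q.1, p.1)) := by
        simp [Fintype.sum_prod_type]
    _ = ∑ q : ι × ι, ∑ p : ι × ι, Ψ (p.1, l) (p.2, j) * (X q.1 q.2 * R (q.2, p.2) (q.1, p.1)) :=
        Finset.sum_comm
    _ = ∑ q : ι × ι, X q.1 q.2 * (∑ n, ∑ a, R (q.2, a) (q.1, n) * Ψ (n, l) (a, j)) := by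
        refine Finset.sum_congr rfl fun q _ => ?_
        simp [Fintype.sum_prod_type, Finset.mul_sum]
        exact Finset.sum_congr rfl fun n _ => Finset.sum_congr rfl fun a _ => by ring
    _ = ∑ q : ι × ι, X q.1 q.2 * (if q.2 = j ∧ l = q.1 then (1:ℂ) else 0) := by
        refine Finset.sum_congr rfl fun q _ => ?_
        rw [Finset.sum_comm, hc q.2 l q.1 j]
    _ = X l j := by simp [Fintype.sum_prod_type, mul_ite, ite_and, Finset.sum_ite_irrel, Finset.sum_const_zero, Finset.sum_ite_eq, Finset.sum_ite_eq']

end Aux5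

section Aux6
variable {ι : Type*} [Fintype ι] [DecidableEq ι]

theorem lambda_ne_zero {q : ℂ} (hq0 : q ≠ 0) (hq1 : q ≠ 1) (hqm1 : q ≠ -1) :
    q - q⁻¹ ≠ 0 := by
  intro h
  have h2 : (q - 1) * (q + 1) = 0 := by
    have h3 : q * q - 1 = 0 := by
      have := sub_eq_zero.mp h
      field_simp at this
      linear_combination this
    linear_combination h3
  rcases mul_eq_zero.mp h2 with h4 | h4
  · exact hq1 (by linear_combination h4)
  · exact hqm1 (by linear_combination h4)

theorem mu_ne_zero {q ν : ℂ} (hq0 : q ≠ 0) (hq1 : q ≠ 1) (hqm1 : q ≠ -1)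
    (hν0 : ν ≠ 0) (hνq : ν ≠ q) (hνq' : ν ≠ -q⁻¹) : muBMW q ν ≠ 0 := by
  have hl := lambda_ne_zero hq0 hq1 hqm1
  have h1 : q - ν ≠ 0 := sub_ne_zero.mpr (fun h => hνq h.symm)
  have h2 : q⁻¹ + ν ≠ 0 := fun h => hνq' (by linear_combination h)
  exact mul_ne_zero (mul_ne_zero (inv_ne_zero hl) (inv_ne_zero hν0)) (mul_ne_zero h1 h2)

theorem Kmat_expand {q : ℂ} (ν : ℂ) (hq0 : q ≠ 0) (R : Op ι) :
    Kmat q ν R = ((q - q⁻¹)⁻¹ * ν⁻¹) • ((1 : Op ι) + (q - q⁻¹) • R - R * R) := by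
  unfold Kmat
  congr 1
  simp only [sub_mul, mul_add, smul_mul_assoc, mul_smul_comm, smul_smul, one_mul, mul_one,
    mul_inv_cancel₀ hq0, inv_mul_cancel₀ hq0, one_smul, sub_smul, smul_add, smul_sub, neg_smul, smul_neg]
  module

theorem K_sq {q ν : ℂ} (hq0 : q ≠ 0) (R : Op ι) (hRK : R * Kmat q ν R = ν • Kmat q ν R) :
    Kmat q ν R * Kmat q ν R = muBMW q ν • Kmat q ν R := by
  set K := Kmat q ν R with hK
  have h1 : K * K = ((q - q⁻¹)⁻¹ * ν⁻¹) • (((1 : Op ι) + (q - q⁻¹) • R - R * R) * K) := by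
    rw [← smul_mul_assoc, ← Kmat_expand ν hq0 R]
  have h2 : ((1 : Op ι) + (q - q⁻¹) • R - R * R) * K
      = (1 + (q - q⁻¹) * ν - ν * ν) • K := by
    rw [sub_mul, add_mul, one_mul, smul_mul_assoc, hRK, mul_assoc, hRK, mul_smul_comm, hRK]
    rw [smul_smul]
    module
  rw [h1, h2, smul_smul]
  have h3 : (q - q⁻¹)⁻¹ * ν⁻¹ * (1 + (q - q⁻¹) * ν - ν * ν) = muBMW q ν := by
    unfold muBMW
    congr 1
    field_simp
    ring
  rw [h3]

theorem rank_smul_ne {n : Type*} [Fintype n] (c : ℂ) (hc : c ≠ 0) (A : Matrix n n ℂ) :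
    (c • A).rank = A.rank := by
  have h : (c • A).mulVecLin = c • A.mulVecLin := by
    ext v i
    simp [Matrix.mulVecLin, Matrix.mulVec, dotProduct, Finset.mul_sum, mul_assoc]
  unfold Matrix.rank
  rw [h, LinearMap.range_smul _ c hc]

theorem trace_eq_rank_of_idem {n : Type*} [Fintype n] [DecidableEq n] (P : Matrix n n ℂ)
    (h : P * P = P) : P.trace = (P.rank : ℂ) := by
  have hf : P.mulVecLin ∘ₗ P.mulVecLin = P.mulVecLin := by
    rw [← Matrix.mulVecLin_mul, h]
  have hproj : LinearMap.IsProj (LinearMap.range P.mulVecLin) P.mulVecLin := by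
    refine ⟨fun x => LinearMap.mem_range_self _ x, fun x hx => ?_⟩
    obtain ⟨y, rfl⟩ := hx
    rw [← LinearMap.comp_apply, hf]
  have ht := hproj.trace
  have h2 : LinearMap.trace ℂ (n → ℂ) P.mulVecLin = P.trace := by
    rw [LinearMap.trace_eq_matrix_trace ℂ (Pi.basisFun ℂ n)]
    congr 1
    rw [LinearMap.toMatrix_eq_toMatrix', ← Matrix.toLin'_apply', LinearMap.toMatrix'_toLin']
  rw [Matrix.rank, ← h2, ht]

theorem trace_K {q ν : ℂ} (hq0 : q ≠ 0) (hmu : muBMW q ν ≠ 0) (R : Op ι)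
    (hRK : R * Kmat q ν R = ν • Kmat q ν R) :
    (Kmat q ν R).trace = muBMW q ν * ((Kmat q ν R).rank : ℂ) := by
  set K := Kmat q ν R
  set μ := muBMW q ν
  have hP : (μ⁻¹ • K) * (μ⁻¹ • K) = μ⁻¹ • K := by
    rw [smul_mul_assoc, mul_smul_comm, K_sq hq0 R hRK, smul_smul, smul_smul,
      mul_assoc, inv_mul_cancel₀ hmu, mul_one]
  have := trace_eq_rank_of_idem _ hP
  rw [Matrix.trace_smul, rank_smul_ne μ⁻¹ (inv_ne_zero hmu) K] at this
  have h2 : μ * (μ⁻¹ • K.trace) = μ * ((K.rank : ℂ)) := by rw [this]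
  rwa [smul_eq_mul, ← mul_assoc, mul_inv_cancel₀ hmu, one_mul] at h2

end Aux6

section Aux7

theorem bmw_flip {A : Type*} [Ring A] [Algebra ℂ A] (l c ν : ℂ) (hν : ν ≠ 0)
    (a b a' b' e1 e2 : A)
    (haa' : a * a' = 1) (ha'a : a' * a = 1) (hbb' : b * b' = 1) (hb'b : b' * b = 1)
    (hbraid : a * b * a = b * a * b)
    (he1 : e1 = c • (1 + l • a - a * a)) (he2 : e2 = c • (1 + l • b - b * b))
    (hbe : b * e2 = ν • e2) (heb : e2 * b = ν • e2)
    (heae : e2 * a * e2 = ν⁻¹ • e2) :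
    e1 * b * e1 = ν⁻¹ • e1 := by
  have hb'e : b' * e2 = ν⁻¹ • e2 := by
    have h1 : b' * (b * e2) = b' * (ν • e2) := by rw [hbe]
    rw [← mul_assoc, hb'b, one_mul, mul_smul_comm] at h1
    calc b' * e2 = ν⁻¹ • (ν • (b' * e2)) := by
          rw [smul_smul, inv_mul_cancel₀ hν, one_smul]
      _ = ν⁻¹ • e2 := by rw [← h1]
  have hbr : b * (a * b) = a * (b * a) := by
    simpa [mul_assoc] using hbraid.symm
  have hbr2 : b * (a * (b * b)) = a * (a * (b * a)) := by
    have h2 : b * a * b * b = a * a * b * a := by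
      rw [← hbraid]
      simp only [mul_assoc]
      rw [hbr]
    simpa [mul_assoc] using h2
  have hw : (b * a) * e2 = e1 * (b * a) := by
    rw [he1, he2, mul_smul_comm, smul_mul_assoc]
    congr 1
    simp only [mul_add, add_mul, mul_sub, sub_mul, mul_one, one_mul, mul_smul_comm,
      smul_mul_assoc, mul_assoc]
    rw [hbr, hbr2]
  have hconj : (b * a) * e2 * (a' * b') = e1 := by
    rw [hw]
    calc e1 * (b * a) * (a' * b') = e1 * (b * ((a * a') * b')) := by simp only [mul_assoc]
      _ = e1 := by rw [haa', one_mul, hbb', mul_one]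
  have key2 : a' * (b * a) = b * (a * b') := by
    calc a' * (b * a) = a' * (b * a * (b * b')) := by rw [hbb', mul_one]
      _ = a' * ((b * a * b) * b') := by simp only [mul_assoc]
      _ = a' * ((a * b * a) * b') := by rw [hbraid]
      _ = b * (a * b') := by
          simp only [← mul_assoc, ha'a, one_mul]
  have hX : e2 * ((a' * (b * a)) * e2) = ν⁻¹ • e2 := by
    rw [key2]
    have h5 : (b * (a * b')) * e2 = b * (a * (ν⁻¹ • e2)) := by
      simp only [mul_assoc, hb'e]
    rw [h5, mul_smul_comm, mul_smul_comm, mul_smul_comm]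
    congr 1
    rw [← mul_assoc, heb, smul_mul_assoc, ← mul_assoc, heae, smul_smul,
      mul_inv_cancel₀ hν, one_smul]
  calc e1 * b * e1
      = ((b * a) * e2 * (a' * b')) * b * ((b * a) * e2 * (a' * b')) := by rw [hconj]
    _ = (b * a) * (e2 * ((a' * (b * a)) * e2)) * (a' * b') := by
        simp only [mul_assoc]
        rw [← mul_assoc b' b, hb'b, one_mul]
    _ = (b * a) * (ν⁻¹ • e2) * (a' * b') := by rw [hX]
    _ = ν⁻¹ • e1 := by
        rw [← hconj, mul_smul_comm, smul_mul_assoc]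

end Aux7

section Aux8
variable {ι : Type*} [Fintype ι] [DecidableEq ι]

theorem e1_rel (q ν : ℂ) (hq0 : q ≠ 0) (hν0 : ν ≠ 0) (R : Op ι) (hBMW : BMWType q ν R) :
    op12 (Kmat q ν R) * op23 R * op12 (Kmat q ν R) = ν⁻¹ • op12 (Kmat q ν R) := by
  obtain ⟨hU, hYB, hRK, hKR, hKRK, -⟩ := hBMW
  obtain ⟨u, hu⟩ := hU
  have hRinv1 : R * ↑u⁻¹ = 1 := by rw [← hu]; exact_mod_cast u.mul_inv
  have hRinv2 : (↑u⁻¹ : Op ι) * R = 1 := by rw [← hu]; exact_mod_cast u.inv_mul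
  refine bmw_flip (q - q⁻¹) ((q - q⁻¹)⁻¹ * ν⁻¹) ν hν0
    (op12 R) (op23 R) (op12 ↑u⁻¹) (op23 ↑u⁻¹) (op12 (Kmat q ν R)) (op23 (Kmat q ν R))
    ?_ ?_ ?_ ?_ hYB ?_ ?_ ?_ ?_ hKRK
  · rw [← op12_mul, hRinv1, op12_one]
  · rw [← op12_mul, hRinv2, op12_one]
  · rw [← op23_mul, hRinv1, op23_one]
  · rw [← op23_mul, hRinv2, op23_one]
  · rw [Kmat_expand ν hq0 R, op12_smul, op12_sub, op12_add, op12_one, op12_smul, op12_mul]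
  · rw [Kmat_expand ν hq0 R, op23_smul, op23_sub, op23_add, op23_one, op23_smul, op23_mul]
  · rw [← op23_mul, hRK, op23_smul]
  · rw [← op23_mul, hKR, op23_smul]

end Aux8

/-- with `r := rank K` one has `Tr₍₂₎K = ν⁻¹ r D` and `Tr₍₁₎K = ν⁻¹ r C`. -/
theorem stmt9 {ι : Type*} [Fintype ι] [DecidableEq ι] [Nonempty ι]
    (q ν : ℂ) (hq0 : q ≠ 0) (hq1 : q ≠ 1) (hqm1 : q ≠ -1)
    (hν0 : ν ≠ 0) (hνq : ν ≠ q) (hνq' : ν ≠ -q⁻¹)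
    (R Ψ : Op ι) (hBMW : BMWType q ν R) (hskew : SkewInverse R Ψ) :
    tr2 (Kmat q ν R) = (ν⁻¹ * ((Kmat q ν R).rank : ℂ)) • tr2 Ψ ∧
    tr1 (Kmat q ν R) = (ν⁻¹ * ((Kmat q ν R).rank : ℂ)) • tr1 Ψ := by
  have hmu : muBMW q ν ≠ 0 := mu_ne_zero hq0 hq1 hqm1 hν0 hνq hνq'
  have he1rel : op12 (Kmat q ν R) * op23 R * op12 (Kmat q ν R)
      = ν⁻¹ • op12 (Kmat q ν R) := e1_rel q ν hq0 hν0 R hBMW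
  set K := Kmat q ν R with hKdef
  set μ := muBMW q ν with hμdef
  have hRK : R * K = ν • K := hBMW.2.2.1
  have hKR : K * R = ν • K := hBMW.2.2.2.1
  have hKRK : op23 K * op12 R * op23 K = ν⁻¹ • op23 K := hBMW.2.2.2.2.1
  have htr : K.trace = μ * ((K.rank : ℂ)) := trace_K hq0 hmu R hRK
  have hKK : K * K = μ • K := K_sq hq0 R hRK
  have hcancel : ∀ X : Matrix ι ι ℂ,
      μ • X = (ν⁻¹ * (μ * ((K.rank : ℂ)))) • (1 : Matrix ι ι ℂ) →
      X = (ν⁻¹ * ((K.rank : ℂ))) • (1 : Matrix ι ι ℂ) := by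
    intro X hX
    have h2 := congrArg (fun Y => μ⁻¹ • Y) hX
    simp only [smul_smul] at h2
    rwa [inv_mul_cancel₀ hmu, one_smul,
      show μ⁻¹ * (ν⁻¹ * (μ * ((K.rank : ℂ)))) = ν⁻¹ * ((K.rank : ℂ)) from by
        field_simp] at h2
  constructor
  · -- Part 1
    have hop23KK : op23 K * op23 K = μ • op23 K := by rw [← op23_mul, hKK, op23_smul]
    have step1 : μ • tr23of3 (op12 R * op23 K)
        = (ν⁻¹ * (μ * ((K.rank : ℂ)))) • (1 : Matrix ι ι ℂ) := by
      calc μ • tr23of3 (op12 R * op23 K)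
          = tr23of3 ((op12 R * op23 K) * op23 K) := by
            rw [mul_assoc, hop23KK, mul_smul_comm, tr23of3_smul]
        _ = tr23of3 (op23 K * (op12 R * op23 K)) := tr23of3_comm _ _
        _ = tr23of3 (ν⁻¹ • op23 K) := by rw [← mul_assoc, hKRK]
        _ = ν⁻¹ • (K.trace • 1) := by rw [tr23of3_smul, tr23of3_op23]
        _ = (ν⁻¹ * (μ * ((K.rank : ℂ)))) • 1 := by rw [htr, smul_smul]
    have step1' := hcancel _ step1
    have h6 : tr2 (R * u2 (tr2 K)) = (ν⁻¹ * ((K.rank : ℂ))) • 1 := by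
      rw [← bridge2, step1']
    calc tr2 K = tr2 (Ψ * u2 (tr2 (R * u2 (tr2 K)))) := (skew_inv2 R Ψ hskew.2 (tr2 K)).symm
      _ = tr2 (Ψ * u2 ((ν⁻¹ * ((K.rank : ℂ))) • 1)) := by rw [h6]
      _ = (ν⁻¹ * ((K.rank : ℂ))) • tr2 Ψ := by
          rw [u2_smul, u2_one, mul_smul_comm, mul_one, tr2_smul]
  · -- Part 2
    have hop12KK : op12 K * op12 K = μ • op12 K := by rw [← op12_mul, hKK, op12_smul]
    have step2 : μ • tr12of3 (op12 K * op23 R)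
        = (ν⁻¹ * (μ * ((K.rank : ℂ)))) • (1 : Matrix ι ι ℂ) := by
      calc μ • tr12of3 (op12 K * op23 R)
          = tr12of3 (op12 K * (op12 K * op23 R)) := by
            rw [← mul_assoc, hop12KK, smul_mul_assoc, tr12of3_smul]
        _ = tr12of3 ((op12 K * op23 R) * op12 K) := tr12of3_comm _ _
        _ = tr12of3 (ν⁻¹ • op12 K) := by rw [show (op12 K * op23 R) * op12 K = ν⁻¹ • op12 K from he1rel]
        _ = ν⁻¹ • (K.trace • 1) := by rw [tr12of3_smul, tr12of3_op12]
        _ = (ν⁻¹ * (μ * ((K.rank : ℂ)))) • 1 := by rw [htr, smul_smul]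
    have step2' := hcancel _ step2
    have h7 : tr1 (u1 (tr1 K) * R) = (ν⁻¹ * ((K.rank : ℂ))) • 1 := by
      rw [← bridge1, step2']
    calc tr1 K = tr1 (Ψ * u1 (tr1 (u1 (tr1 K) * R))) := (skew_inv1 R Ψ hskew.1 (tr1 K)).symm
      _ = tr1 (Ψ * u1 ((ν⁻¹ * ((K.rank : ℂ))) • 1)) := by rw [h7]
      _ = (ν⁻¹ * ((K.rank : ℂ))) • tr1 Ψ := by
          rw [u1_smul, u1_one, mul_smul_comm, mul_one, tr1_smul]

end

end BMWPaper
end
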